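/- Fix a constant c > 0 and integers m ≥ 1 and r ≥ 0. Asymptotically almost surely, the Erdős–Rényi random graph G(n, c/n) (for n ≥ m) satisfies both of the following: (1) for all distinct vertices u, v among the first m vertices {0, ..., m−1} of Fin n, there is no walk of length at most 2r + 1 from u to v; and (2) no vertex among {0, ..., m−1} admits a walk of length at most 2r + 1 to a vertex lying on a cycle of length at most 2r + 1. Moreover the probability of the complementary event is O(1/n). -/

import Mathlib

open MeasureTheory Filter

noncomputable def erMeasure (n : ℕ) (p : ENNReal) (hp : p ≤ 1) :
    Measure ({e : Sym2 (Fin n) // ¬ e.IsDiag} → Bool) :=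
  Measure.pi fun _ => (PMF.bernoulli p.toNNReal
    (by simpa using ENNReal.toNNReal_mono ENNReal.one_ne_top hp)).toMeasure

def graphOf (n : ℕ) (f : {e : Sym2 (Fin n) // ¬ e.IsDiag} → Bool) :
    SimpleGraph (Fin n) where
  Adj u v := ∃ h : u ≠ v, f ⟨s(u, v), fun hd => h (Sym2.mk_isDiag_iff.mp hd)⟩ = true
  symm := by
    constructor
    rintro u v ⟨h, hf⟩
    refine ⟨h.symm, ?_⟩
    have he : (⟨s(v, u), fun hd => h.symm (Sym2.mk_isDiag_iff.mp hd)⟩ :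
        {e : Sym2 (Fin n) // ¬ e.IsDiag}) =
        ⟨s(u, v), fun hd => h (Sym2.mk_isDiag_iff.mp hd)⟩ :=
      Subtype.ext (Sym2.eq_swap)
    rw [he]; exact hf
  loopless := by constructor; rintro u ⟨h, _⟩; exact h rfl

/-- The good event of STATEMENT 10: among the first m vertices (those with value < m),
no two distinct ones are joined by a walk of length at most 2r+1, and none of them
reaches, by a walk of length at most 2r+1, a vertex lying on a cycle of length
at most 2r+1. -/
def goodEvent (m r n : ℕ) (f : {e : Sym2 (Fin n) // ¬ e.IsDiag} → Bool) : Prop :=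
  (∀ u v : Fin n, u.val < m → v.val < m → u ≠ v →
      ¬ ∃ p : (graphOf n f).Walk u v, p.length ≤ 2 * r + 1) ∧
  (∀ u : Fin n, u.val < m →
      ¬ ∃ w : Fin n,
        (∃ (x : Fin n) (p : (graphOf n f).Walk x x),
          p.IsCycle ∧ p.length ≤ 2 * r + 1 ∧ w ∈ p.support) ∧
        ∃ q : (graphOf n f).Walk u w, q.length ≤ 2 * r + 1)

namespace ER10

abbrev E (n : ℕ) := {e : Sym2 (Fin n) // ¬ e.IsDiag}
abbrev FB (n : ℕ) := E n → Bool

def edgeOf {n : ℕ} (u v : Fin n) (h : u ≠ v) : E n :=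
  ⟨s(u,v), fun hd => h (Sym2.mk_isDiag_iff.mp hd)⟩

lemma adj_iff {n : ℕ} (f : FB n) (u v : Fin n) :
    (graphOf n f).Adj u v ↔ ∃ h : u ≠ v, f (edgeOf u v h) = true := Iff.rfl

lemma meas_all {n : ℕ} (s : Set (FB n)) : MeasurableSet s := by
  have hsing : ∀ g : FB n, MeasurableSet ({g} : Set (FB n)) := by
    intro g
    have : ({g} : Set (FB n)) = ⋂ e, (fun f : FB n => f e) ⁻¹' {g e} := by
      ext f; simp [funext_iff]
    rw [this]
    exact MeasurableSet.iInter fun e => (measurable_pi_apply e) (by trivial)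
  have : s = ⋃ g ∈ s, {g} := by simp
  rw [this]
  exact MeasurableSet.biUnion (Set.to_countable s) fun g _ => hsing g

lemma measure_forall_true {n : ℕ} (p : ENNReal) (hp : p ≤ 1) (S : Finset (E n)) :
    erMeasure n p hp {f | ∀ e ∈ S, f e = true} = p ^ S.card := by
  classical
  have hset : {f : FB n | ∀ e ∈ S, f e = true} =
      Set.pi Set.univ (fun e => if e ∈ S then {true} else Set.univ) := by
    ext f
    simp only [Set.mem_pi, Set.mem_univ, forall_true_left, Set.mem_setOf_eq]
    constructor
    · intro h e; by_cases he : e ∈ S <;> simp [he, h e]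
    · intro h e he; have := h e; simp [he] at this; exact this
  rw [hset, erMeasure, Measure.pi_pi]
  have hval : ∀ e : E n, (PMF.bernoulli p.toNNReal (by simpa using ENNReal.toNNReal_mono ENNReal.one_ne_top hp)).toMeasure (if e ∈ S then {true} else Set.univ)
      = if e ∈ S then p else 1 := by
    intro e
    by_cases he : e ∈ S <;> simp only [he, if_true, if_false]
    · rw [PMF.toMeasure_apply_singleton _ _ (by trivial)]
      exact ENNReal.coe_toNNReal (ne_top_of_le_ne_top ENNReal.one_ne_top hp)
    · exact measure_univ
  simp_rw [hval]
  rw [Finset.prod_ite_mem, Finset.univ_inter, Finset.prod_const]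

def chainEvent (n k : ℕ) (σ : Fin (k+1) → Fin n) : Set (FB n) :=
  {f | ∀ i : Fin k, (graphOf n f).Adj (σ i.castSucc) (σ i.succ)}

def cycEvent (n j : ℕ) (w : (Fin (j+1) → Fin n) × Fin (j+1)) : Set (FB n) :=
  chainEvent n j w.1 ∩ {f | (graphOf n f).Adj (w.1 (Fin.last j)) (w.1 w.2)}

open Classical in
noncomputable def WA (n m ℓ : ℕ) : Finset (Fin (ℓ+1) → Fin n) :=
  Finset.univ.filter (fun σ => Function.Injective σ ∧ (σ 0).val < m ∧
    (σ (Fin.last ℓ)).val < m ∧ σ 0 ≠ σ (Fin.last ℓ))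

open Classical in
noncomputable def WB (n m j : ℕ) : Finset ((Fin (j+1) → Fin n) × Fin (j+1)) :=
  Finset.univ.filter (fun w => Function.Injective w.1 ∧ (w.1 0).val < m ∧ w.2.val + 2 ≤ j)

lemma chain_edge_map_injective {n k : ℕ} {σ : Fin (k+1) → Fin n} (hσ : Function.Injective σ) :
    Function.Injective (fun i : Fin k =>
      edgeOf (σ i.castSucc) (σ i.succ) (fun h => (Fin.castSucc_lt_succ (i := i)).ne (hσ h))) := by
  intro i j hij
  have h2 : s(σ i.castSucc, σ i.succ) = s(σ j.castSucc, σ j.succ) := congrArg Subtype.val hij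
  rw [Sym2.eq_iff] at h2
  rcases h2 with ⟨h3, _⟩ | ⟨h3, h4⟩
  · have := hσ h3
    exact Fin.ext (by simpa [Fin.ext_iff] using this)
  · have e1 : i.castSucc = j.succ := hσ h3
    have e2 : i.succ = j.castSucc := hσ h4
    simp only [Fin.ext_iff, Fin.coe_castSucc, Fin.val_succ] at e1 e2
    omega

lemma measure_chainEvent_le {n k : ℕ} (p : ENNReal) (hp : p ≤ 1)
    {σ : Fin (k+1) → Fin n} (hσ : Function.Injective σ) :
    erMeasure n p hp (chainEvent n k σ) ≤ p ^ k := by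
  classical
  set S : Finset (E n) := Finset.image (fun i : Fin k =>
      edgeOf (σ i.castSucc) (σ i.succ) (fun h => (Fin.castSucc_lt_succ (i := i)).ne (hσ h)))
    Finset.univ with hS
  have hsub : chainEvent n k σ ⊆ {f | ∀ e ∈ S, f e = true} := by
    intro f hf e he
    simp only [hS, Finset.mem_image, Finset.mem_univ, true_and] at he
    obtain ⟨i, rfl⟩ := he
    obtain ⟨h', hf'⟩ := hf i
    exact hf'
  calc erMeasure n p hp (chainEvent n k σ) ≤ erMeasure n p hp {f | ∀ e ∈ S, f e = true} :=
        measure_mono hsub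
    _ = p ^ S.card := measure_forall_true p hp S
    _ = p ^ k := by
        rw [Finset.card_image_of_injective _ (chain_edge_map_injective hσ), Finset.card_univ,
          Fintype.card_fin]

lemma measure_cycEvent_le {n m j : ℕ} (p : ENNReal) (hp : p ≤ 1)
    {w : (Fin (j+1) → Fin n) × Fin (j+1)} (hw : w ∈ WB n m j) :
    erMeasure n p hp (cycEvent n j w) ≤ p ^ (j+1) := by
  classical
  simp only [WB, Finset.mem_filter, Finset.mem_univ, true_and] at hw
  obtain ⟨hσ, _, hc⟩ := hw
  obtain ⟨σ, c⟩ := w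
  simp only at hσ hc ⊢
  have hne : σ (Fin.last j) ≠ σ c := by
    intro h
    have := hσ h
    simp only [Fin.ext_iff, Fin.val_last] at this
    omega
  set S : Finset (E n) := Finset.image (fun i : Fin j =>
      edgeOf (σ i.castSucc) (σ i.succ) (fun h => (Fin.castSucc_lt_succ (i := i)).ne (hσ h)))
    Finset.univ with hS
  set S' : Finset (E n) := insert (edgeOf _ _ hne) S with hS'
  have hnotmem : edgeOf _ _ hne ∉ S := by
    intro hmem
    simp only [hS, Finset.mem_image, Finset.mem_univ, true_and] at hmem
    obtain ⟨i, hi⟩ := hmem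
    have h2 : s(σ i.castSucc, σ i.succ) = s(σ (Fin.last j), σ c) := congrArg Subtype.val hi
    rw [Sym2.eq_iff] at h2
    rcases h2 with ⟨h3, h4⟩ | ⟨h3, h4⟩ <;>
    · have e1 := hσ h3
      have e2 := hσ h4
      simp only [Fin.ext_iff, Fin.coe_castSucc, Fin.val_succ, Fin.val_last] at e1 e2
      have : (i : ℕ) < j := i.isLt
      omega
  have hsub : cycEvent n j (σ, c) ⊆ {f | ∀ e ∈ S', f e = true} := by
    rintro f ⟨hf1, hf2⟩ e he
    rw [hS', Finset.mem_insert] at he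
    rcases he with rfl | he
    · obtain ⟨h', hf'⟩ := hf2
      exact hf'
    · simp only [hS, Finset.mem_image, Finset.mem_univ, true_and] at he
      obtain ⟨i, rfl⟩ := he
      obtain ⟨h', hf'⟩ := hf1 i
      exact hf'
  calc erMeasure n p hp (cycEvent n j (σ, c)) ≤ erMeasure n p hp {f | ∀ e ∈ S', f e = true} :=
        measure_mono hsub
    _ = p ^ S'.card := measure_forall_true p hp S'
    _ = p ^ (j+1) := by
        rw [hS', Finset.card_insert_of_notMem hnotmem,
          Finset.card_image_of_injective _ (chain_edge_map_injective hσ), Finset.card_univ,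
          Fintype.card_fin]


lemma card_WA {n : ℕ} (m ℓ : ℕ) (hm : 1 ≤ m) (hℓ : 1 ≤ ℓ) :
    (WA n m ℓ).card ≤ m * m * n ^ (ℓ-1) := by
  classical
  have hF : (WA n m ℓ).card ≤ (Finset.univ : Finset (Fin m × Fin m × (Fin (ℓ-1) → Fin n))).card := by
    apply Finset.card_le_card_of_injOn (fun σ =>
      (⟨min (σ 0).val (m-1), by omega⟩, ⟨min (σ (Fin.last ℓ)).val (m-1), by omega⟩,
        fun i => σ ⟨i.val+1, by omega⟩))
    · intro a _; exact Finset.mem_univ _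
    · intro σ hσ σ' hσ' heq
      simp only [Finset.coe_filter, WA, Set.mem_setOf_eq, Finset.mem_univ, true_and] at hσ hσ'
      obtain ⟨_, h0, hl, _⟩ := hσ
      obtain ⟨_, h0', hl', _⟩ := hσ'
      simp only [Prod.mk.injEq, Fin.mk.injEq] at heq
      obtain ⟨e0, el, emid⟩ := heq
      rw [min_eq_left (by omega), min_eq_left (by omega)] at e0
      rw [min_eq_left (by omega), min_eq_left (by omega)] at el
      funext i
      rcases Nat.eq_zero_or_pos i.val with h | h
      · have : i = 0 := Fin.ext h
        subst this
        exact Fin.ext e0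
      · rcases Nat.lt_or_ge i.val ℓ with h2 | h2
        · have := congrFun emid ⟨i.val - 1, by omega⟩
          simpa only [show i.val - 1 + 1 = i.val by omega, Fin.eta] using this
        · have hi : i = Fin.last ℓ := Fin.ext (by have := i.isLt; simp [Fin.val_last]; omega)
          subst hi
          exact Fin.ext el
  calc (WA n m ℓ).card ≤ _ := hF
    _ ≤ m * m * n ^ (ℓ-1) := by
        simp [Fintype.card_fun, mul_assoc]

lemma card_WB {n : ℕ} (m j : ℕ) (hm : 1 ≤ m) :
    (WB n m j).card ≤ m * n ^ j * (j+1) := by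
  classical
  have hF : (WB n m j).card ≤
      (Finset.univ : Finset (Fin m × (Fin j → Fin n) × Fin (j+1))).card := by
    apply Finset.card_le_card_of_injOn (fun w =>
      (⟨min (w.1 0).val (m-1), by omega⟩, fun i => w.1 i.succ, w.2))
    · intro a _; exact Finset.mem_univ _
    · intro w hw w' hw' heq
      simp only [Finset.coe_filter, WB, Set.mem_setOf_eq, Finset.mem_univ, true_and] at hw hw'
      obtain ⟨_, h0, _⟩ := hw
      obtain ⟨_, h0', _⟩ := hw'
      simp only [Prod.mk.injEq, Fin.mk.injEq] at heq
      obtain ⟨e0, emid, ec⟩ := heq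
      rw [min_eq_left (by omega), min_eq_left (by omega)] at e0
      have hfun : w.1 = w'.1 := by
        funext i
        rcases Nat.eq_zero_or_pos i.val with h | h
        · have : i = 0 := Fin.ext h
          subst this
          exact Fin.ext e0
        · have := congrFun emid ⟨i.val - 1, by omega⟩
          have h2 : (⟨i.val - 1, by omega⟩ : Fin j).succ = i := Fin.ext (by simp; omega)
          rwa [h2] at this
      exact Prod.ext hfun ec
  calc (WB n m j).card ≤ _ := hF
    _ ≤ m * n ^ j * (j+1) := by
        simp [Fintype.card_fun, mul_assoc]

end ER10

section Graph
open SimpleGraph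

variable {V : Type*} {G : SimpleGraph V}

lemma ER10.getVert_mem_support {u v : V} (p : G.Walk u v) (i : ℕ) :
    p.getVert i ∈ p.support := by
  rw [Walk.mem_support_iff_exists_getVert]
  rcases Nat.lt_or_ge i (p.length + 1) with h | h
  · exact ⟨i, rfl, by omega⟩
  · exact ⟨p.length, by rw [Walk.getVert_length, Walk.getVert_of_length_le _ (by omega)], le_rfl⟩

lemma ER10.getVert_eq_support_getElem {u v : V} (p : G.Walk u v) {i : ℕ}
    (h : i < p.support.length) : p.getVert i = p.support[i] := by
  induction p generalizing i with
  | nil => simp only [Walk.support_nil, List.length_singleton] at h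
           interval_cases i <;> simp [Walk.getVert_zero]
  | cons hadj q ih =>
    rcases i with _ | i
    · simp [Walk.getVert_zero]
    · simp only [Walk.support_cons, List.length_cons] at h
      simp only [Walk.getVert_cons_succ, Walk.support_cons, List.getElem_cons_succ]
      exact ih (by omega)

lemma ER10.path_getVert_inj {u v : V} {p : G.Walk u v} (hp : p.IsPath) {i j : ℕ}
    (hi : i ≤ p.length) (hj : j ≤ p.length) (h : p.getVert i = p.getVert j) : i = j := by
  have hi' : i < p.support.length := by rw [Walk.length_support]; omega
  have hj' : j < p.support.length := by rw [Walk.length_support]; omega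
  rw [ER10.getVert_eq_support_getElem p hi', ER10.getVert_eq_support_getElem p hj'] at h
  exact (hp.support_nodup.getElem_inj_iff).mp h

lemma ER10.cycle_getVert_inj {w : V} {c : G.Walk w w} (hc : c.support.tail.Nodup) {i j : ℕ}
    (hi : i < c.length) (hj : j < c.length) (h : c.getVert i = c.getVert j) : i = j := by
  have hlen : c.support.length = c.length + 1 := Walk.length_support c
  have htail : c.support.tail.length = c.length := by
    rcases c with _ | ⟨hadj, q⟩
    · simp at hi
    · simp [Walk.length_support]
  -- getVert k = support.tail[k-1] for 1 ≤ k ≤ length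
  have key : ∀ k : ℕ, 1 ≤ k → k ≤ c.length → ∀ (hk : k - 1 < c.support.tail.length),
      c.getVert k = c.support.tail[k-1] := by
    rintro (_ | k') hk1 hk2 hk
    · omega
    have h1 : k' + 1 < c.support.length := by omega
    rw [ER10.getVert_eq_support_getElem c h1]
    rcases c with _ | ⟨hadj, q⟩
    · simp at hk2
    · simp only [Walk.support_cons, List.tail_cons, List.getElem_cons_succ, Nat.add_sub_cancel]
  -- handle i = 0 or j = 0 via getVert length = w
  rcases Nat.eq_zero_or_pos i with rfl | hi1 <;> rcases Nat.eq_zero_or_pos j with rfl | hj1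
  · rfl
  · exfalso
    rw [Walk.getVert_zero] at h
    have hw : c.getVert c.length = c.support.tail[c.length - 1]'(by omega) :=
      key c.length (by omega) le_rfl (by omega)
    rw [Walk.getVert_length] at hw
    rw [key j hj1 (by omega) (by omega)] at h
    have := hc.getElem_inj_iff.mp (hw.symm.trans h)
    omega
  · exfalso
    rw [Walk.getVert_zero] at h
    have hw : c.getVert c.length = c.support.tail[c.length - 1]'(by omega) :=
      key c.length (by omega) le_rfl (by omega)
    rw [Walk.getVert_length] at hw
    rw [key i hi1 (by omega) (by omega)] at h
    have := hc.getElem_inj_iff.mp (hw.symm.trans h.symm)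
    omega
  · rw [key i hi1 (by omega) (by omega), key j hj1 (by omega) (by omega)] at h
    have := hc.getElem_inj_iff.mp h
    omega

lemma ER10.mem_support_rotate {w x : V} [DecidableEq V] (c : G.Walk x x) (hw : w ∈ c.support) {y : V}
    (hy : y ∈ (c.rotate w hw).support) : y ∈ c.support := by
  rw [Walk.support_eq_cons (c.rotate w hw)] at hy
  rcases List.eq_or_mem_of_mem_cons hy with rfl | hy'
  · exact hw
  · have hperm := Walk.support_rotate c w hw
    have : y ∈ c.support.tail := hperm.mem_iff.mp hy'
    exact List.mem_of_mem_tail this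

lemma ER10.length_rotate {w x : V} [DecidableEq V] (c : G.Walk x x) (hw : w ∈ c.support) :
    (c.rotate w hw).length = c.length := by
  have := Walk.take_spec c hw
  have h2 := congrArg Walk.length this
  rw [Walk.length_append] at h2
  unfold Walk.rotate
  rw [Walk.length_append]
  omega

lemma ER10.tad (S : List V) : ∀ {u w : V} (q : G.Walk u w), q.IsPath → w ∈ S →
    ∃ (a : ℕ) (τ : Fin (a+1) → V), a ≤ q.length ∧ Function.Injective τ ∧ τ 0 = u ∧
      τ (Fin.last a) ∈ S ∧ (∀ i : Fin (a+1), i ≠ Fin.last a → τ i ∉ S) ∧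
      (∀ i : Fin a, G.Adj (τ i.castSucc) (τ i.succ)) ∧ (∀ i, τ i ∈ q.support) := by
  classical
  intro u w q
  induction q with
  | @nil z =>
    intro hq hw
    refine ⟨0, fun _ => z, le_rfl, fun a b _ => Fin.ext (by omega), rfl, hw, ?_, ?_, ?_⟩
    · intro i hi; exact absurd (Fin.ext (by omega)) hi
    · intro i; exact i.elim0
    · intro i; simp [Walk.support_nil]
  | @cons u y w hadj q' ih =>
    intro hq hw
    by_cases hu : u ∈ S
    · refine ⟨0, fun _ => u, Nat.zero_le _, fun a b _ => Fin.ext (by omega), rfl, hu, ?_, ?_, ?_⟩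
      · intro i hi; exact absurd (Fin.ext (by omega)) hi
      · intro i; exact i.elim0
      · intro i; simp [Walk.support_cons]
    · obtain ⟨a', τ', hlen, hinj, h0, hlast, hnot, hadj', hsupp⟩ := ih hq.of_cons hw
      have husupp : u ∉ q'.support := by
        have := hq.support_nodup
        rw [Walk.support_cons] at this
        exact (List.nodup_cons.mp this).1
      refine ⟨a' + 1, Fin.cons u τ', by simp [Walk.length_cons]; omega, ?_, ?_, ?_, ?_, ?_, ?_⟩
      · rw [Fin.cons_injective_iff]
        refine ⟨?_, hinj⟩
        rintro ⟨i, rfl⟩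
        exact husupp (hsupp i)
      · simp
      · have h1 : Fin.last (a' + 1) = (Fin.last a').succ := rfl
        rw [h1, Fin.cons_succ]
        exact hlast
      · intro i hi
        rcases Fin.eq_zero_or_eq_succ i with rfl | ⟨j, rfl⟩
        · simpa using hu
        · rw [Fin.cons_succ]
          apply hnot
          intro hj
          apply hi
          rw [hj]
          rfl
      · intro i
        rcases Fin.eq_zero_or_eq_succ i with rfl | ⟨j, rfl⟩
        · rw [Fin.castSucc_zero, Fin.cons_zero, Fin.cons_succ, h0]
          exact hadj
        · rw [← Fin.succ_castSucc, Fin.cons_succ, Fin.cons_succ]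
          exact hadj' j
      · intro i
        rcases Fin.eq_zero_or_eq_succ i with rfl | ⟨j, rfl⟩
        · simp [Walk.support_cons]
        · rw [Fin.cons_succ, Walk.support_cons]
          exact List.mem_cons_of_mem _ (hsupp j)

end Graph

section Extract
open SimpleGraph ER10

set_option maxHeartbeats 1000000 in
lemma ER10.bad_subset (m r n : ℕ) :
    {f : FB n | ¬ goodEvent m r n f} ⊆
      (⋃ ℓ ∈ Finset.Icc 1 (2*r+1), ⋃ σ ∈ WA n m ℓ, chainEvent n ℓ σ) ∪
      (⋃ j ∈ Finset.range (2*(2*r+1)), ⋃ w ∈ WB n m j, cycEvent n j w) := by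
  classical
  intro f hf
  simp only [Set.mem_setOf_eq, goodEvent, not_and_or] at hf
  rcases hf with hf | hf
  · -- case A
    push_neg at hf
    obtain ⟨u, v, hu, hv, huv, p, hp⟩ := hf
    set q := p.bypass with hqdef
    have hq : q.IsPath := Walk.bypass_isPath p
    have hql : q.length ≤ 2*r+1 := le_trans (Walk.length_bypass_le p) hp
    have hq1 : 1 ≤ q.length := by
      rcases Nat.eq_zero_or_pos q.length with h | h
      · exact absurd (Walk.eq_of_length_eq_zero h) huv
      · exact h
    set ℓ := q.length with hℓdef
    set σ : Fin (ℓ+1) → Fin n := fun i => q.getVert i.val with hσdef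
    have hinj : Function.Injective σ :=
      fun i j h => Fin.ext (ER10.path_getVert_inj hq (by omega) (by omega) h)
    left
    apply Set.mem_biUnion (Finset.mem_Icc.mpr ⟨hq1, hql⟩)
    apply Set.mem_biUnion (show σ ∈ WA n m ℓ from ?_)
    · intro i
      have : i.val < ℓ := i.isLt
      simpa [hσdef, Fin.coe_castSucc, Fin.val_succ] using q.adj_getVert_succ this
    · simp only [WA, Finset.mem_filter, Finset.mem_univ, true_and]
      refine ⟨hinj, ?_, ?_, ?_⟩
      · simpa [hσdef, Walk.getVert_zero] using hu
      · simpa [hσdef, Fin.val_last, hℓdef, Walk.getVert_length] using hv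
      · simp only [hσdef, Fin.val_last, Fin.val_zero, hℓdef]
        rw [Walk.getVert_zero, Walk.getVert_length]
        exact huv
  · -- case B
    push_neg at hf
    obtain ⟨u, hu, w, ⟨x, p, hpc, hpl, hwp⟩, q0, hq0l⟩ := hf
    set q := q0.bypass with hqdef
    have hq : q.IsPath := Walk.bypass_isPath q0
    have hql : q.length ≤ 2*r+1 := le_trans (Walk.length_bypass_le q0) hq0l
    obtain ⟨a, τ, ha, hτinj, hτ0, hτlast, hτnot, hτadj, hτsupp⟩ :=
      ER10.tad p.support q hq hwp
    set w' := τ (Fin.last a) with hw'def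
    set rot := p.rotate w' hτlast with hrotdef
    have hrotc : rot.IsCycle := hpc.rotate hτlast
    have hb3 : 3 ≤ rot.length := hrotc.three_le_length
    have hbl : rot.length = p.length := ER10.length_rotate p hτlast
    set b := rot.length with hbdef
    have hbL : b ≤ 2*r+1 := by omega
    set j := a + b - 1 with hjdef
    have haj : a + 2 ≤ j := by omega
    set σ : Fin (j+1) → Fin n := fun i =>
      if h : i.val ≤ a then τ ⟨i.val, by omega⟩ else rot.getVert (i.val - a) with hσdef
    have hσa : ∀ (i : Fin (j+1)) (h : i.val ≤ a), σ i = τ ⟨i.val, by omega⟩ := by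
      intro i h; simp only [hσdef, dif_pos h]
    have hσb : ∀ (i : Fin (j+1)) (h : a < i.val), σ i = rot.getVert (i.val - a) := by
      intro i h; simp only [hσdef, dif_neg (Nat.not_le.mpr h)]
    have hlasta : (⟨a, by omega⟩ : Fin (a+1)) = Fin.last a := Fin.ext rfl
    have hrot0 : rot.getVert 0 = w' := Walk.getVert_zero rot
    have hrotb : rot.getVert b = w' := Walk.getVert_length rot
    have hmemrot : ∀ k : ℕ, rot.getVert k ∈ p.support := fun k =>
      ER10.mem_support_rotate p hτlast (ER10.getVert_mem_support rot k)
    have hcycinj : ∀ {i j' : ℕ}, i < b → j' < b → rot.getVert i = rot.getVert j' → i = j' :=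
      fun hi hj h => ER10.cycle_getVert_inj hrotc.support_nodup hi hj h
    have hinj : Function.Injective σ := by
      intro i1 i2 heq
      by_cases h1 : i1.val ≤ a <;> by_cases h2 : i2.val ≤ a
      · rw [hσa i1 h1, hσa i2 h2] at heq
        have := hτinj heq
        exact Fin.ext (by simpa [Fin.ext_iff] using this)
      · exfalso
        rw [hσa i1 h1, hσb i2 (by omega)] at heq
        rcases Nat.lt_or_ge i1.val a with h | h
        · exact hτnot ⟨i1.val, by omega⟩ (by simp [Fin.ext_iff]; omega) (heq ▸ hmemrot _)
        · have hi1a : i1.val = a := by omega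
          have : τ ⟨i1.val, by omega⟩ = w' := congrArg τ (Fin.ext (by simp [hi1a]))
          rw [this] at heq
          have hlt : i2.val - a < b := by have := i2.isLt; omega
          have := hcycinj (by omega) hlt (hrot0.trans heq)
          omega
      · exfalso
        rw [hσa i2 h2, hσb i1 (by omega)] at heq
        rcases Nat.lt_or_ge i2.val a with h | h
        · exact hτnot ⟨i2.val, by omega⟩ (by simp [Fin.ext_iff]; omega) (heq ▸ hmemrot _)
        · have hi2a : i2.val = a := by omega
          have : τ ⟨i2.val, by omega⟩ = w' := congrArg τ (Fin.ext (by simp [hi2a]))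
          rw [this] at heq
          have hlt : i1.val - a < b := by have := i1.isLt; omega
          have := hcycinj hlt (by omega) (heq.trans hrot0.symm)
          omega
      · rw [hσb i1 (by omega), hσb i2 (by omega)] at heq
        have l1 : i1.val - a < b := by have := i1.isLt; omega
        have l2 : i2.val - a < b := by have := i2.isLt; omega
        have := hcycinj l1 l2 heq
        exact Fin.ext (by omega)
    right
    have hjmem : j ∈ Finset.range (2*(2*r+1)) := Finset.mem_range.mpr (by omega)
    apply Set.mem_biUnion hjmem
    apply Set.mem_biUnion (show (⟨σ, ⟨a, by omega⟩⟩ : (Fin (j+1) → Fin n) × Fin (j+1)) ∈ WB n m j from ?_)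
    · simp only [cycEvent, chainEvent, Set.mem_inter_iff, Set.mem_setOf_eq]
      constructor
      · -- chain
        intro i
        rcases Nat.lt_or_ge i.val a with h | h
        · rw [hσa i.castSucc (by simp; omega), hσa i.succ (by simp [Fin.val_succ]; omega)]
          have := hτadj ⟨i.val, h⟩
          have e1 : (⟨i.val, h⟩ : Fin a).castSucc = ⟨(i.castSucc).val, by simp; omega⟩ :=
            Fin.ext (by simp)
          have e2 : (⟨i.val, h⟩ : Fin a).succ = ⟨(i.succ).val, by simp [Fin.val_succ]; omega⟩ :=
            Fin.ext (by simp)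
          rw [e1, e2] at this
          exact this
        · rcases Nat.eq_or_lt_of_le h with h' | h'
          · -- i.val = a
            rw [hσa i.castSucc (by simp; omega), hσb i.succ (by simp [Fin.val_succ]; omega)]
            have e1 : τ ⟨(i.castSucc).val, by simp; omega⟩ = w' :=
              congrArg τ (Fin.ext (by simp; omega))
            rw [e1]
            have e2 : (i.succ).val - a = 1 := by simp [Fin.val_succ]; omega
            rw [e2]
            have hadj1 := rot.adj_getVert_succ (show 0 < rot.length by omega)
            rw [hrot0] at hadj1
            simpa using hadj1
          · -- i.val > a
            rw [hσb i.castSucc (by simp; omega), hσb i.succ (by simp [Fin.val_succ]; omega)]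
            have e2 : (i.succ).val - a = ((i.castSucc).val - a) + 1 := by
              simp [Fin.val_succ]; omega
            rw [e2]
            exact rot.adj_getVert_succ (by have := i.isLt; simp only [Fin.coe_castSucc]; omega)
      · -- closing edge
        rw [hσb (Fin.last j) (by simp [Fin.val_last]; omega), hσa ⟨a, by omega⟩ (le_refl a)]
        have e1 : (Fin.last j).val - a = b - 1 := by simp [Fin.val_last]; omega
        rw [e1]
        have hadj1 := rot.adj_getVert_succ (show b - 1 < rot.length by omega)
        have e3 : b - 1 + 1 = b := by omega
        rw [e3, hrotb] at hadj1
        exact hadj1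
    · simp only [WB, Finset.mem_filter, Finset.mem_univ, true_and]
      refine ⟨hinj, ?_, by exact haj⟩
      rw [hσa 0 (by exact Nat.zero_le a)]
      have : τ ⟨(0 : Fin (j+1)).val, by simp⟩ = u := (congrArg τ (Fin.ext rfl)).trans hτ0
      rw [this]
      exact hu

end Extract

section Assembly
open ER10 ENNReal

lemma ER10.pow_term {n k : ℕ} (hn : 1 ≤ n) (hk : 1 ≤ k) {c : ℝ} (hc : 0 < c) :
    (n : ℝ≥0∞)^(k-1) * (min 1 (ENNReal.ofReal (c / n)))^k
      ≤ (ENNReal.ofReal c)^k * (n:ℝ≥0∞)⁻¹ := by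
  have hn0 : (0:ℝ) < n := by exact_mod_cast hn
  have hP : min 1 (ENNReal.ofReal (c/n)) ≤ ENNReal.ofReal c * (n:ℝ≥0∞)⁻¹ := by
    refine (min_le_right _ _).trans ?_
    rw [div_eq_mul_inv, ENNReal.ofReal_mul hc.le, ENNReal.ofReal_inv_of_pos hn0,
      ENNReal.ofReal_natCast]
  have hne0 : ((n:ℝ≥0∞))^(k-1) ≠ 0 := pow_ne_zero _ (Nat.cast_ne_zero.mpr (by omega))
  have hnetop : ((n:ℝ≥0∞))^(k-1) ≠ ⊤ := pow_ne_top (natCast_ne_top n)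
  calc (n : ℝ≥0∞)^(k-1) * (min 1 (ENNReal.ofReal (c / n)))^k
      ≤ (n : ℝ≥0∞)^(k-1) * (ENNReal.ofReal c * (n:ℝ≥0∞)⁻¹)^k :=
        mul_le_mul_right (pow_le_pow_left' hP k) _
    _ = (ENNReal.ofReal c)^k * ((n : ℝ≥0∞)^(k-1) * ((n:ℝ≥0∞)⁻¹)^k) := by ring
    _ = (ENNReal.ofReal c)^k * (n:ℝ≥0∞)⁻¹ := by
        congr 1
        rw [← ENNReal.inv_pow, show k = (k-1)+1 by omega, pow_succ,
          ENNReal.mul_inv (Or.inl hne0) (Or.inl hnetop), ← mul_assoc,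
          show (k-1)+1-1 = k-1 by omega,
          ENNReal.mul_inv_cancel hne0 hnetop, one_mul]

lemma ER10.measure_bad_le (c : ℝ) (hc : 0 < c) (m r : ℕ) (hm : 1 ≤ m) :
    ∃ K : ℝ≥0∞, K ≠ ⊤ ∧ ∀ n : ℕ, 1 ≤ n →
      erMeasure n (min 1 (ENNReal.ofReal (c / n))) (min_le_left _ _)
        {f | ¬ goodEvent m r n f} ≤ K * (n:ℝ≥0∞)⁻¹ := by
  classical
  set C := ENNReal.ofReal c with hC
  set L := 2*r+1 with hL
  refine ⟨(∑ ℓ ∈ Finset.Icc 1 L, (m*m : ℝ≥0∞) * C^ℓ)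
    + (∑ j ∈ Finset.range (2*L), ((m:ℝ≥0∞) * (j+1)) * C^(j+1)), ?_, ?_⟩
  · refine ENNReal.add_ne_top.mpr ⟨?_, ?_⟩ <;>
    · refine (ENNReal.sum_lt_top.mpr fun i _ => ?_).ne
      have hCt : C < ⊤ := by rw [hC]; exact ENNReal.ofReal_lt_top
      exact ENNReal.mul_lt_top (by finiteness) (ENNReal.pow_lt_top hCt)
  · intro n hn
    set P := min 1 (ENNReal.ofReal (c / n)) with hP
    have hP1 : P ≤ 1 := min_le_left _ _
    set μ := erMeasure n P (min_le_left _ _) with hμ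
    have h1 : μ {f | ¬ goodEvent m r n f} ≤
        μ (⋃ ℓ ∈ Finset.Icc 1 L, ⋃ σ ∈ WA n m ℓ, chainEvent n ℓ σ)
        + μ (⋃ j ∈ Finset.range (2*L), ⋃ w ∈ WB n m j, cycEvent n j w) :=
      le_trans (measure_mono (ER10.bad_subset m r n)) (measure_union_le _ _)
    have hA : μ (⋃ ℓ ∈ Finset.Icc 1 L, ⋃ σ ∈ WA n m ℓ, chainEvent n ℓ σ)
        ≤ ∑ ℓ ∈ Finset.Icc 1 L, ((m*m : ℝ≥0∞) * C^ℓ) * (n:ℝ≥0∞)⁻¹ := by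
      refine le_trans (measure_biUnion_finset_le _ _) (Finset.sum_le_sum fun ℓ hℓ => ?_)
      rw [Finset.mem_Icc] at hℓ
      refine le_trans (measure_biUnion_finset_le _ _) ?_
      have hterm : ∀ σ ∈ WA n m ℓ, μ (chainEvent n ℓ σ) ≤ P ^ ℓ := by
        intro σ hσ
        simp only [WA, Finset.mem_filter, Finset.mem_univ, true_and] at hσ
        exact measure_chainEvent_le P (min_le_left _ _) hσ.1
      calc ∑ σ ∈ WA n m ℓ, μ (chainEvent n ℓ σ) ≤ (WA n m ℓ).card • (P ^ ℓ) :=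
            Finset.sum_le_card_nsmul _ _ _ hterm
        _ = ((WA n m ℓ).card : ℝ≥0∞) * P ^ ℓ := by rw [nsmul_eq_mul]
        _ ≤ ((m*m*n^(ℓ-1) : ℕ) : ℝ≥0∞) * P ^ ℓ := by
            exact mul_le_mul_left (Nat.cast_le.mpr (card_WA m ℓ hm hℓ.1)) _
        _ = (m*m : ℝ≥0∞) * ((n:ℝ≥0∞)^(ℓ-1) * P ^ ℓ) := by push_cast; ring
        _ ≤ (m*m : ℝ≥0∞) * (C^ℓ * (n:ℝ≥0∞)⁻¹) :=
            mul_le_mul_right (ER10.pow_term hn hℓ.1 hc) _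
        _ = ((m*m : ℝ≥0∞) * C^ℓ) * (n:ℝ≥0∞)⁻¹ := by ring
    have hB : μ (⋃ j ∈ Finset.range (2*L), ⋃ w ∈ WB n m j, cycEvent n j w)
        ≤ ∑ j ∈ Finset.range (2*L), (((m:ℝ≥0∞) * (j+1)) * C^(j+1)) * (n:ℝ≥0∞)⁻¹ := by
      refine le_trans (measure_biUnion_finset_le _ _) (Finset.sum_le_sum fun j hj => ?_)
      refine le_trans (measure_biUnion_finset_le _ _) ?_
      have hterm : ∀ w ∈ WB n m j, μ (cycEvent n j w) ≤ P ^ (j+1) := by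
        intro w hw
        exact measure_cycEvent_le P (min_le_left _ _) hw
      calc ∑ w ∈ WB n m j, μ (cycEvent n j w) ≤ (WB n m j).card • (P ^ (j+1)) :=
            Finset.sum_le_card_nsmul _ _ _ hterm
        _ = ((WB n m j).card : ℝ≥0∞) * P ^ (j+1) := by rw [nsmul_eq_mul]
        _ ≤ ((m*n^j*(j+1) : ℕ) : ℝ≥0∞) * P ^ (j+1) := by
            exact mul_le_mul_left (Nat.cast_le.mpr (card_WB m j hm)) _
        _ = ((m:ℝ≥0∞) * (j+1)) * ((n:ℝ≥0∞)^j * P ^ (j+1)) := by push_cast; ring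
        _ ≤ ((m:ℝ≥0∞) * (j+1)) * (C^(j+1) * (n:ℝ≥0∞)⁻¹) := by
            refine mul_le_mul_right ?_ _
            have := ER10.pow_term (n := n) (k := j+1) hn (by omega) hc
            simpa using this
        _ = (((m:ℝ≥0∞) * (j+1)) * C^(j+1)) * (n:ℝ≥0∞)⁻¹ := by ring
    calc μ {f | ¬ goodEvent m r n f} ≤ _ := h1
      _ ≤ (∑ ℓ ∈ Finset.Icc 1 L, ((m*m : ℝ≥0∞) * C^ℓ) * (n:ℝ≥0∞)⁻¹)
          + (∑ j ∈ Finset.range (2*L), (((m:ℝ≥0∞) * (j+1)) * C^(j+1)) * (n:ℝ≥0∞)⁻¹) :=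
          add_le_add hA hB
      _ = _ := by rw [← Finset.sum_mul, ← Finset.sum_mul, ← add_mul]

end Assembly

instance erMeasure.isProbabilityMeasure (n : ℕ) (p : ENNReal) (hp : p ≤ 1) :
    IsProbabilityMeasure (erMeasure n p hp) := by
  unfold erMeasure; infer_instance


/-- Fix c > 0, m ≥ 1 and r ≥ 0. A.a.s. G(n, c/n) satisfies the good event,
and moreover the probability of the complementary event is O(1/n). -/
theorem erdosRenyi_first_vertices_far_apart_aas
    (c : ℝ) (hc : 0 < c) (m : ℕ) (hm : 1 ≤ m) (r : ℕ) :
    Tendsto (fun n : ℕ =>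
        erMeasure n (min 1 (ENNReal.ofReal (c / n))) (min_le_left _ _)
          {f | goodEvent m r n f})
      atTop (nhds 1) ∧
    (fun n : ℕ =>
        (erMeasure n (min 1 (ENNReal.ofReal (c / n))) (min_le_left _ _)
          {f | ¬ goodEvent m r n f}).toReal)
      =O[atTop] (fun n : ℕ => 1 / (n : ℝ)) := by
  obtain ⟨K, hKt, hK⟩ := ER10.measure_bad_le c hc m r hm
  have hmul0 : Tendsto (fun n : ℕ => K * (n:ENNReal)⁻¹) atTop (nhds 0) := by
    have := ENNReal.Tendsto.const_mul (a := K) ENNReal.tendsto_inv_nat_nhds_zero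
      (Or.inr hKt)
    simpa using this
  have hbad0 : Tendsto (fun n : ℕ =>
      erMeasure n (min 1 (ENNReal.ofReal (c / n))) (min_le_left _ _)
        {f | ¬ goodEvent m r n f}) atTop (nhds 0) := by
    apply tendsto_of_tendsto_of_tendsto_of_le_of_le' tendsto_const_nhds hmul0
    · exact Eventually.of_forall fun _ => zero_le
    · exact eventually_atTop.mpr ⟨1, fun n hn => hK n hn⟩
  constructor
  · have hgood : ∀ n : ℕ,
        erMeasure n (min 1 (ENNReal.ofReal (c / n))) (min_le_left _ _) {f | goodEvent m r n f}
        = 1 - erMeasure n (min 1 (ENNReal.ofReal (c / n))) (min_le_left _ _)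
            {f | ¬ goodEvent m r n f} := by
      intro n
      have hc' : {f : ER10.FB n | goodEvent m r n f} = {f | ¬ goodEvent m r n f}ᶜ := by
        ext f; simp
      rw [hc', prob_compl_eq_one_sub (ER10.meas_all _)]
    simp only [hgood]
    have := ENNReal.Tendsto.sub (tendsto_const_nhds (x := (1:ENNReal))) hbad0
      (Or.inl ENNReal.one_ne_top)
    simpa using this
  · rw [Asymptotics.isBigO_iff]
    refine ⟨K.toReal, eventually_atTop.mpr ⟨1, fun n hn => ?_⟩⟩
    have hb := hK n hn
    have hKn : K * (n:ENNReal)⁻¹ ≠ ⊤ :=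
      ENNReal.mul_ne_top hKt (ENNReal.inv_ne_top.mpr (Nat.cast_ne_zero.mpr (by omega)))
    have h1 := ENNReal.toReal_mono hKn hb
    rw [ENNReal.toReal_mul, ENNReal.toReal_inv, ENNReal.toReal_natCast] at h1
    have hn0 : (0:ℝ) < n := by exact_mod_cast hn
    rw [Real.norm_of_nonneg ENNReal.toReal_nonneg, Real.norm_of_nonneg (by positivity)]
    calc (erMeasure n (min 1 (ENNReal.ofReal (c / n))) (min_le_left _ _)
          {f | ¬ goodEvent m r n f}).toReal ≤ K.toReal * (n:ℝ)⁻¹ := h1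
      _ = K.toReal * (1/(n:ℝ)) := by rw [one_div]
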